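/- Let S be a nonempty countable family of linear orders and let s := Ξ(S). Then Ξ(S ⊔ {s}) is order isomorphic to Ξ(S); that is, adjoining the shuffle itself as a new shuffland does not change the shuffle up to order isomorphism. -/

import Mathlib

/-- A coloring `χ : L → ι` of a linear order `L` is *dense* if for every color `i`
and all `x < x'` in `L` there is `y` with `x < y < x'` and `χ y = i`. -/
def DenseColoring {L : Type*} [LinearOrder L] {ι : Type*} (χ : L → ι) : Prop :=
  ∀ i : ι, ∀ x x' : L, x < x' → ∃ y : L, x < y ∧ y < x' ∧ χ y = i



noncomputable section ShuffleAux

open Order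

namespace ShuffleAux

variable {ι : Type*}

section BackForth

variable {α β : Type*} [LinearOrder α] [LinearOrder β]

theorem exists_between_finsets_colored [NoMinOrder β] [NoMaxOrder β] [Nonempty β]
    {cβ : β → ι} (hcβ : DenseColoring cβ) (i : ι) (lo hi : Finset β)
    (lo_lt_hi : ∀ x ∈ lo, ∀ y ∈ hi, x < y) :
    ∃ m : β, cβ m = i ∧ (∀ x ∈ lo, x < m) ∧ ∀ y ∈ hi, m < y := by
  by_cases nlo : lo.Nonempty <;> by_cases nhi : hi.Nonempty
  · obtain ⟨m, h1, h2, h3⟩ := hcβ i (lo.max' nlo) (hi.min' nhi)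
      (lo_lt_hi _ (lo.max'_mem nlo) _ (hi.min'_mem nhi))
    exact ⟨m, h3, fun x hx => (Finset.le_max' lo x hx).trans_lt h1,
      fun y hy => h2.trans_le (Finset.min'_le hi y hy)⟩
  · obtain ⟨z, hz⟩ := exists_gt (lo.max' nlo)
    obtain ⟨z', hz'⟩ := exists_gt z
    obtain ⟨m, h1, h2, h3⟩ := hcβ i z z' hz'
    exact ⟨m, h3, fun x hx => (Finset.le_max' lo x hx).trans_lt (hz.trans h1),
      fun y hy => absurd ⟨y, hy⟩ nhi⟩
  · obtain ⟨z, hz⟩ := exists_lt (hi.min' nhi)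
    obtain ⟨z', hz'⟩ := exists_lt z
    obtain ⟨m, h1, h2, h3⟩ := hcβ i z' z hz'
    exact ⟨m, h3, fun x hx => absurd ⟨x, hx⟩ nlo,
      fun y hy => (h2.trans hz).trans_le (Finset.min'_le hi y hy)⟩
  · obtain ⟨z⟩ := ‹Nonempty β›
    obtain ⟨z', hz'⟩ := exists_gt z
    obtain ⟨m, h1, h2, h3⟩ := hcβ i z z' hz'
    exact ⟨m, h3, fun x hx => absurd ⟨x, hx⟩ nlo, fun y hy => absurd ⟨y, hy⟩ nhi⟩

variable (cα : α → ι) (cβ : β → ι)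

def CPartialIso : Type _ :=
  { f : Finset (α × β) //
    (∀ p ∈ f, ∀ q ∈ f, cmp p.1 q.1 = cmp p.2 q.2) ∧ ∀ p ∈ f, cα p.1 = cβ p.2 }

instance : Inhabited (CPartialIso cα cβ) :=
  ⟨⟨∅, fun _ h => absurd h (Finset.notMem_empty _),
      fun _ h => absurd h (Finset.notMem_empty _)⟩⟩

instance : Preorder (CPartialIso cα cβ) := Subtype.preorder _

variable {cα cβ}

theorem exists_across_colored [NoMinOrder β] [NoMaxOrder β] [Nonempty β]
    (hcβ : DenseColoring cβ) (f : CPartialIso cα cβ) (a : α) :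
    ∃ b : β, cβ b = cα a ∧ ∀ p ∈ f.val, cmp p.1 a = cmp p.2 b := by
  by_cases h : ∃ b, (a, b) ∈ f.val
  · obtain ⟨b, hb⟩ := h
    exact ⟨b, (f.prop.2 _ hb).symm, fun p hp => f.prop.1 _ hp _ hb⟩
  have key : ∀ x ∈ (f.val.filter fun p : α × β => p.1 < a).image Prod.snd,
      ∀ y ∈ (f.val.filter fun p : α × β => a < p.1).image Prod.snd, x < y := by
    intro x hx y hy
    rw [Finset.mem_image] at hx hy
    rcases hx with ⟨p, hp1, rfl⟩
    rcases hy with ⟨q, hq1, rfl⟩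
    rw [Finset.mem_filter] at hp1 hq1
    rw [← lt_iff_lt_of_cmp_eq_cmp (f.prop.1 _ hp1.1 _ hq1.1)]
    exact hp1.2.trans hq1.2
  obtain ⟨b, hbc, hb, hb'⟩ := exists_between_finsets_colored hcβ (cα a) _ _ key
  refine ⟨b, hbc, ?_⟩
  rintro ⟨p1, p2⟩ hp
  have hne : p1 ≠ a := fun he => h ⟨p2, he ▸ hp⟩
  rcases lt_or_gt_of_ne hne with hl | hr
  · have h2 : p1 < a ∧ p2 < b :=
      ⟨hl, hb _ (Finset.mem_image.mpr ⟨(p1, p2), Finset.mem_filter.mpr ⟨hp, hl⟩, rfl⟩)⟩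
    rw [← cmp_eq_lt_iff, ← cmp_eq_lt_iff] at h2
    exact h2.1.trans h2.2.symm
  · have h2 : a < p1 ∧ b < p2 :=
      ⟨hr, hb' _ (Finset.mem_image.mpr ⟨(p1, p2), Finset.mem_filter.mpr ⟨hp, hr⟩, rfl⟩)⟩
    rw [← cmp_eq_gt_iff, ← cmp_eq_gt_iff] at h2
    exact h2.1.trans h2.2.symm

def CPartialIso.comm (f : CPartialIso cα cβ) : CPartialIso cβ cα := by
  refine ⟨f.val.image Prod.swap, ?_, ?_⟩
  · rintro ⟨x, y⟩ hp ⟨x', y'⟩ hq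
    rw [Finset.mem_image] at hp hq
    obtain ⟨⟨u, v⟩, hu, huv⟩ := hp
    obtain ⟨⟨u', v'⟩, hu', huv'⟩ := hq
    cases huv; cases huv'
    exact (f.prop.1 _ hu _ hu').symm
  · rintro ⟨x, y⟩ hp
    rw [Finset.mem_image] at hp
    obtain ⟨⟨u, v⟩, hu, huv⟩ := hp
    cases huv
    exact (f.prop.2 _ hu).symm

def definedAtLeft [NoMinOrder β] [NoMaxOrder β] [Nonempty β]
    (hcβ : DenseColoring cβ) (a : α) : Cofinal (CPartialIso cα cβ) where
  carrier := {f | ∃ b : β, (a, b) ∈ f.val}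
  isCofinal f := by
    obtain ⟨b, hbc, a_b⟩ := exists_across_colored hcβ f a
    refine ⟨⟨insert (a, b) f.val, ?_, ?_⟩, ⟨b, Finset.mem_insert_self _ _⟩,
      Finset.subset_insert _ _⟩
    · intro p hp q hq
      rw [Finset.mem_insert] at hp hq
      rcases hp with rfl | pf <;> rcases hq with rfl | qf
      · simp only [cmp_self_eq_eq]
      · rw [cmp_eq_cmp_symm]; exact a_b _ qf
      · exact a_b _ pf
      · exact f.prop.1 _ pf _ qf
    · intro p hp
      rw [Finset.mem_insert] at hp
      rcases hp with rfl | pf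
      · exact hbc.symm
      · exact f.prop.2 _ pf

def definedAtRight [NoMinOrder α] [NoMaxOrder α] [Nonempty α]
    (hcα : DenseColoring cα) (b : β) : Cofinal (CPartialIso cα cβ) where
  carrier := {f | ∃ a : α, (a, b) ∈ f.val}
  isCofinal f := by
    obtain ⟨f', ⟨a, ha⟩, hl⟩ := (definedAtLeft hcα b).isCofinal f.comm
    refine ⟨f'.comm, ⟨a, ?_⟩, ?_⟩
    · show (a, b) ∈ f'.val.image Prod.swap
      exact Finset.mem_image.mpr ⟨(b, a), ha, rfl⟩
    · show f.val ⊆ f'.val.image Prod.swap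
      intro p hp
      have h1 : p.swap ∈ f.val.image Prod.swap := Finset.mem_image_of_mem _ hp
      have h2 : p.swap ∈ f'.val := hl h1
      exact Finset.mem_image.mpr ⟨p.swap, h2, Prod.swap_swap p⟩

theorem exists_colored_iso [Countable α] [Countable β]
    [NoMinOrder α] [NoMaxOrder α] [Nonempty α]
    [NoMinOrder β] [NoMaxOrder β] [Nonempty β]
    (hcα : DenseColoring cα) (hcβ : DenseColoring cβ) :
    ∃ e : α ≃o β, ∀ a, cβ (e a) = cα a := by
  cases nonempty_encodable α
  cases nonempty_encodable β
  let to_cofinal : α ⊕ β → Cofinal (CPartialIso cα cβ) := fun p =>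
    Sum.recOn p (fun a => definedAtLeft hcβ a) (fun b => definedAtRight hcα b)
  let I : Ideal (CPartialIso cα cβ) := idealOfCofinals default to_cofinal
  have hF : ∀ a : α, ∃ b, ∃ f, f ∈ I ∧ (a, b) ∈ f.val := fun a => by
    obtain ⟨f, ⟨b, hb⟩, hfI⟩ := cofinal_meets_idealOfCofinals default to_cofinal (Sum.inl a)
    exact ⟨b, f, hfI, hb⟩
  have hG : ∀ b : β, ∃ a, ∃ f, f ∈ I ∧ (a, b) ∈ f.val := fun b => by
    obtain ⟨f, ⟨a, ha⟩, hfI⟩ := cofinal_meets_idealOfCofinals default to_cofinal (Sum.inr b)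
    exact ⟨a, f, hfI, ha⟩
  choose Fb Ff hFf hFmem using hF
  choose Ga Gf hGf hGmem using hG
  have key : ∀ a b, cmp a (Ga b) = cmp (Fb a) b := fun a b => by
    obtain ⟨m, _, fm, gm⟩ := I.directed _ (hFf a) _ (hGf b)
    exact m.prop.1 (a, _) (fm (hFmem a)) (_, b) (gm (hGmem b))
  exact ⟨OrderIso.ofCmpEqCmp Fb Ga key, fun a => ((Ff a).prop.2 _ (hFmem a)).symm⟩

end BackForth



theorem sigma_mk_eq_mk_cast {κ : Type*} {T : κ → Type*} {b b' : κ} (h : b = b') (y : T b) :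
    (⟨b, y⟩ : Sigma T) = ⟨b', h ▸ y⟩ := by cases h; rfl

noncomputable def sigmaLexCongr {A B : Type*} [LinearOrder A] [LinearOrder B]
    {G : A → Type*} {H : B → Type*} [∀ a, LinearOrder (G a)] [∀ b, LinearOrder (H b)]
    (e : A ≃o B) (φ : ∀ a, G a ≃o H (e a)) : (Σₗ a, G a) ≃o (Σₗ b, H b) := by
  refine StrictMono.orderIsoOfSurjective
    (fun p => toLex ⟨e (ofLex p).1, φ _ (ofLex p).2⟩) ?_ ?_
  · rintro ⟨a, x⟩ ⟨a', x'⟩ h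
    cases h with
    | left _ _ hab => exact Sigma.Lex.left _ _ (e.strictMono hab)
    | right _ _ hxy => exact Sigma.Lex.right _ _ ((φ _).strictMono hxy)
  · rintro ⟨b, y⟩
    have h : b = e (e.symm b) := (e.apply_symm_apply b).symm
    refine ⟨toLex ⟨e.symm b, (φ (e.symm b)).symm (h ▸ y)⟩, ?_⟩
    show (⟨e (e.symm b), (φ (e.symm b)) ((φ (e.symm b)).symm (h ▸ y))⟩ : Σₗ b, H b)
      = toLex ⟨b, y⟩
    rw [(φ (e.symm b)).apply_symm_apply]
    exact congrArg toLex (sigma_mk_eq_mk_cast h y).symm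

noncomputable def sigmaLexAssoc {A : Type*} [LinearOrder A] {G : A → Type*}
    [∀ a, LinearOrder (G a)] (T : ∀ a, G a → Type*) [∀ a x, LinearOrder (T a x)] :
    (Σₗ p : (Σₗ a, G a), T (ofLex p).1 (ofLex p).2) ≃o (Σₗ a, Σₗ x : G a, T a x) := by
  refine StrictMono.orderIsoOfSurjective
    (fun p => toLex ⟨(ofLex (ofLex p).1).1, toLex ⟨(ofLex (ofLex p).1).2, (ofLex p).2⟩⟩) ?_ ?_
  · rintro ⟨⟨a, x⟩, t⟩ ⟨⟨a', x'⟩, t'⟩ h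
    cases h with
    | left _ _ hab =>
      cases hab with
      | left _ _ h1 => exact Sigma.Lex.left _ _ h1
      | right _ _ h2 => exact Sigma.Lex.right _ _ (Sigma.Lex.left _ _ h2)
    | right _ _ ht => exact Sigma.Lex.right _ _ (Sigma.Lex.right _ _ ht)
  · rintro ⟨a, x, t⟩
    exact ⟨toLex ⟨toLex ⟨a, x⟩, t⟩, rfl⟩

noncomputable def punitSigmaIso {X : Type*} [LinearOrder X] :
    (Σₗ _u : PUnit.{1}, X) ≃o X := by
  refine StrictMono.orderIsoOfSurjective (fun p => (ofLex p).2) ?_ ?_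
  · rintro ⟨u, x⟩ ⟨u', x'⟩ h
    cases h with
    | left _ _ hab => cases u; cases u'; exact absurd hab (lt_irrefl _)
    | right _ _ hxy => exact hxy
  · exact fun x => ⟨toLex ⟨PUnit.unit, x⟩, rfl⟩

def eqIso {κ : Type*} {F : κ → Type*} [∀ i, LinearOrder (F i)] {i j : κ} (h : i = j) :
    F i ≃o F j := by subst h; exact OrderIso.refl _




def Fib : Option ι → Type
  | none => ℚ
  | some _ => PUnit

instance : ∀ o : Option ι, LinearOrder (Fib o)
  | none => inferInstanceAs (LinearOrder ℚ)
  | some _ => inferInstanceAs (LinearOrder PUnit)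

instance : ∀ o : Option ι, Countable (Fib o)
  | none => inferInstanceAs (Countable ℚ)
  | some _ => inferInstanceAs (Countable PUnit)

instance : ∀ o : Option ι, Nonempty (Fib o)
  | none => inferInstanceAs (Nonempty ℚ)
  | some _ => inferInstanceAs (Nonempty PUnit)

def col (χ : ℚ → ι) : ∀ o : Option ι, Fib o → ι
  | none => χ
  | some i => fun _ => i

theorem exists_col_eq (χ : ℚ → ι) :
    ∀ (o : Option ι) (i : ι), o = some i → ∃ z : Fib o, col χ o z = i := by
  rintro o i rfl
  exact ⟨PUnit.unit, rfl⟩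

theorem dense_in_fiber {χ : ℚ → ι} (hχ : DenseColoring χ) :
    ∀ (o : Option ι) (i : ι) (x x' : Fib o), x < x' →
      ∃ y : Fib o, x < y ∧ y < x' ∧ col χ o y = i := by
  rintro (_ | j) i x x' hxx'
  · exact hχ i x x' hxx'
  · cases x; cases x'; exact absurd hxx' (lt_irrefl _)

variable (χ' : ℚ → Option ι)

theorem noMaxL : NoMaxOrder (Σₗ q : ℚ, Fib (χ' q)) := by
  constructor
  rintro ⟨q, x⟩
  obtain ⟨q', hq'⟩ := exists_gt q
  exact ⟨toLex ⟨q', Classical.arbitrary _⟩, Sigma.Lex.left _ _ hq'⟩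

theorem noMinL : NoMinOrder (Σₗ q : ℚ, Fib (χ' q)) := by
  constructor
  rintro ⟨q, x⟩
  obtain ⟨q', hq'⟩ := exists_lt q
  exact ⟨toLex ⟨q', Classical.arbitrary _⟩, Sigma.Lex.left _ _ hq'⟩

def cL (χ : ℚ → ι) : (Σₗ q : ℚ, Fib (χ' q)) → ι :=
  fun p => col χ (χ' (ofLex p).1) (ofLex p).2

theorem denseColoring_cL {χ : ℚ → ι} (hχ : DenseColoring χ) (hχ' : DenseColoring χ') :
    DenseColoring (cL χ' χ) := by
  rintro i ⟨q, x⟩ ⟨q', x'⟩ hlt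
  cases hlt with
  | left _ _ hqq' =>
    obtain ⟨y, h1, h2, h3⟩ := hχ' (some i) q q' hqq'
    obtain ⟨z, hz⟩ := exists_col_eq χ (χ' y) i h3
    exact ⟨toLex ⟨y, z⟩, Sigma.Lex.left _ _ h1, Sigma.Lex.left _ _ h2, hz⟩
  | right _ _ huv =>
    rename_i v
    obtain ⟨y, h1, h2, h3⟩ := dense_in_fiber hχ (χ' q) i x v huv
    exact ⟨toLex ⟨q, y⟩, Sigma.Lex.right _ _ h1, Sigma.Lex.right _ _ h2, h3⟩

noncomputable def punitSigmaIso' {X : Type*} [LinearOrder X] :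
    (Σₗ _u : PUnit.{1}, X) ≃o X := by
  refine StrictMono.orderIsoOfSurjective (fun p => (ofLex p).2) ?_ ?_
  · rintro ⟨u, x⟩ ⟨u', x'⟩ h
    cases h with
    | left _ _ hab => cases u; cases u'; exact absurd hab (lt_irrefl _)
    | right _ _ hxy => exact hxy
  · exact fun x => ⟨toLex ⟨PUnit.unit, x⟩, rfl⟩

noncomputable def fiberIso (χ : ℚ → ι) (F : ι → Type*) [∀ i, LinearOrder (F i)]
    (F' : Option ι → Type*) [∀ o, LinearOrder (F' o)]
    (hsome : ∀ i : ι, Nonempty (F' (some i) ≃o F i))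
    (hnone : Nonempty (F' none ≃o (Σₗ q : ℚ, F (χ q)))) :
    ∀ o : Option ι, (Σₗ x : Fib o, F (col χ o x)) ≃o F' o
  | none => hnone.some.symm
  | some i => punitSigmaIso'.trans (hsome i).some.symm


end ShuffleAux

open ShuffleAux in
/-- Let `S` be a nonempty countable family of linear orders (indexed by `ι` via `F`)
and let `s := Ξ(S)`.  If `F' : Option ι → LinearOrder` extends `F` (i.e. `F' (some i)`
is isomorphic to `F i`) with `F' none` isomorphic to `Ξ(S)`, then `Ξ(F') ≅ Ξ(F)`:
adjoining the shuffle itself as a new shuffland does not change the shuffle. -/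
theorem shuffle_adjoin_shuffle {ι : Type*} [Nonempty ι] [Countable ι]
    (F : ι → Type*) [∀ i, LinearOrder (F i)]
    (χ : ℚ → ι) (hχ : DenseColoring χ)
    (F' : Option ι → Type*) [∀ o, LinearOrder (F' o)]
    (hsome : ∀ i : ι, Nonempty (F' (some i) ≃o F i))
    (hnone : Nonempty (F' none ≃o (Σₗ q : ℚ, F (χ q))))
    (χ' : ℚ → Option ι) (hχ' : DenseColoring χ') :
    Nonempty ((Σₗ q : ℚ, F' (χ' q)) ≃o (Σₗ q : ℚ, F (χ q))) := by
  haveI : Countable (Σₗ q : ℚ, Fib (χ' q)) :=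
    inferInstanceAs (Countable (Σ q : ℚ, Fib (χ' q)))
  haveI : Nonempty (Σₗ q : ℚ, Fib (χ' q)) :=
    ⟨toLex ⟨0, Classical.arbitrary _⟩⟩
  haveI := noMaxL χ'
  haveI := noMinL χ'
  have hc : DenseColoring (cL χ' χ) := denseColoring_cL χ' hχ hχ'
  obtain ⟨e, he⟩ := exists_colored_iso hc hχ
  let iso1 : (Σₗ q : ℚ, F' (χ' q)) ≃o
      (Σₗ q : ℚ, (Σₗ x : Fib (χ' q), F (col χ (χ' q) x))) :=
    sigmaLexCongr (OrderIso.refl ℚ) (fun q => (fiberIso χ F F' hsome hnone (χ' q)).symm)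
  let iso2 := sigmaLexAssoc (A := ℚ) (G := fun q => Fib (χ' q))
    (T := fun q x => F (col χ (χ' q) x))
  let iso3 : (Σₗ p : (Σₗ q : ℚ, Fib (χ' q)), F (cL χ' χ p)) ≃o (Σₗ q : ℚ, F (χ q)) :=
    sigmaLexCongr e (fun p => eqIso (F := F) (he p).symm)
  exact ⟨iso1.trans (iso2.symm.trans iso3)⟩

end ShuffleAux
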